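/- arXiv:0812.4562 — 2 statements merged into one kernel-verified Lean document; each statement's English description precedes it below -/
import Mathlib

section
/- Let Γ be a (d−1)-dimensional simplicial complex with shelling L, and let K be a subset of the set of facets of Γ. Let L' = (τ'_1, τ'_2, …, τ'_{r'}) be the ordering of K inherited from L, and suppose T_{L'}(τ) = T_L(τ) for every τ ∈ K. Then Γ' = ∪_{i=1}^{r'} τ̄'_i is a shellable subcomplex of Γ (with L' a shelling of Γ'), and its h-vector (h'_0, …, h'_d) satisfies h'_i = |{ τ ∈ K : |T_L(τ)| = i }| for each i. -/
/-!
For a shelling `L`, let `R(τ)` be the set of vertices `v ∈ τ` such that `τ \ {v}` is covered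
by earlier facets. Since the covered part of `τ` is pure of codimension one, a face `γ ⊆ τ` is
covered before `τ` exactly when it misses a vertex of `R(τ)`. Hence
`T_L(τ) = {τ \ {v} : v ∈ R(τ)}`, and the faces of the complex split into the disjoint intervals
`[R(τ), τ]`, each contributing `∑_{R(τ) ⊆ γ ⊆ τ} x^|γ| (1 - x)^(d - |γ|) = x^|R(τ)|`; so `h_i`
counts the facets with `|T_L(τ)| = i`. For the subfamily `L'`, the hypothesis
`T_{L'}(τ) = T_L(τ)` makes the covered parts of every `τ` agree for `L'` and `L`, so `L'`
inherits the shelling property and the formula applies to it.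
-/

open Finset

/-- An (abstract) simplicial complex: a family of finite subsets closed under taking subsets. -/
def IsComplex {V : Type*} (K : Set (Finset V)) : Prop :=
  ∀ s ∈ K, ∀ t, t ⊆ s → t ∈ K

/-- Number of faces of cardinality `i` (that is, `f_{i-1}`). -/
noncomputable def faceCount {V : Type*} (K : Set (Finset V)) (i : ℕ) : ℕ :=
  {s | s ∈ K ∧ s.card = i}.ncard

/-- `h` is the h-vector of the `(d-1)`-dimensional complex `K`:
`Σ_{i=0}^d h_i x^i = Σ_{i=0}^d f_{i-1} x^i (1-x)^{d-i}`. -/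
def IsHVector {V : Type*} (K : Set (Finset V)) (d : ℕ) (h : ℕ → ℤ) : Prop :=
  ∑ i ∈ Finset.range (d + 1), Polynomial.C (h i) * Polynomial.X ^ i =
    ∑ i ∈ Finset.range (d + 1),
      Polynomial.C ((faceCount K i : ℤ)) * Polynomial.X ^ i * (1 - Polynomial.X) ^ (d - i)

/-- `K` is pure of dimension `d - 1`: nonempty in top dimension, and every face is
contained in a face of cardinality `d`. -/
def IsPureDim {V : Type*} (K : Set (Finset V)) (d : ℕ) : Prop :=
  (∃ s ∈ K, s.card = d) ∧ ∀ s ∈ K, ∃ t ∈ K, s ⊆ t ∧ t.card = d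

/-- The facets listed before `τ` in the ordering `L`. -/
def prevFacets {V : Type*} [DecidableEq V] (L : List (Finset V)) (τ : Finset V) :
    List (Finset V) :=
  L.takeWhile (fun τ' => τ' != τ)

/-- `γ` lies in `∪_{j<i} τ̄_j`, the union of the closures of the facets listed before `τ`. -/
def coveredBefore {V : Type*} [DecidableEq V] (L : List (Finset V)) (τ γ : Finset V) : Prop :=
  ∃ τ' ∈ prevFacets L τ, γ ⊆ τ'

/-- `T_L(τ)`: the set of facets of `τ̄ ∩ (∪_{j<i} τ̄_j)`. -/
def TL {V : Type*} [DecidableEq V] (L : List (Finset V)) (τ : Finset V) : Set (Finset V) :=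
  {γ | γ ⊆ τ ∧ coveredBefore L τ γ ∧
    ∀ γ', γ ⊆ γ' → γ' ⊆ τ → coveredBefore L τ γ' → γ' = γ}

/-- `L` is a shelling of the pure `(d-1)`-dimensional complex `K`: it lists the facets
(faces of cardinality `d`) without repetition, every face of `K` lies under some facet,
and for every non-initial facet `τ` the complex `τ̄ ∩ (∪_{j<i} τ̄_j)` is pure of
dimension `d - 2`. -/
def IsShelling {V : Type*} [DecidableEq V] (K : Set (Finset V)) (d : ℕ)
    (L : List (Finset V)) : Prop :=
  L.Nodup ∧
  (∀ τ, τ ∈ L ↔ τ ∈ K ∧ τ.card = d) ∧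
  (∀ s ∈ K, ∃ t ∈ L, s ⊆ t) ∧
  (∀ τ ∈ L, prevFacets L τ ≠ [] →
    IsPureDim {γ | γ ⊆ τ ∧ coveredBefore L τ γ} (d - 1))

/-- Monomials in `k` variables `x_0 < x_1 < … < x_{k-1}`, recorded by exponent vectors. -/
abbrev Mono (k : ℕ) := Fin k → ℕ

/-- Total degree of a monomial. -/
def mDeg {k : ℕ} (μ : Mono k) : ℕ := ∑ i, μ i

/-- Divisibility of monomials. -/
def mDvd {k : ℕ} (ν μ : Mono k) : Prop := ∀ i, ν i ≤ μ i

/-- `S(a_1, …, a_k)`: monomials whose exponent of `x_i` is at most `a_i ∈ ℕ ∪ {∞}`. -/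
def SBound {k : ℕ} (b : Fin k → ℕ∞) : Set (Mono k) :=
  {μ | ∀ i, (μ i : ℕ∞) ≤ b i}

/-- A multicomplex in `S(b)`: a nonempty set of monomials of `S(b)` closed under divisibility. -/
def IsMulticomplex {k : ℕ} (b : Fin k → ℕ∞) (M : Set (Mono k)) : Prop :=
  M.Nonempty ∧ M ⊆ SBound b ∧ ∀ μ ∈ M, ∀ ν, mDvd ν μ → ν ∈ M

/-- `F_i(M)`: the number of monomials of `M` of total degree `i`. -/
noncomputable def FVec {k : ℕ} (M : Set (Mono k)) (i : ℕ) : ℕ :=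
  {μ ∈ M | mDeg μ = i}.ncard

/-- Reverse lexicographic order (within a fixed total degree): `μ < ν` if for some `i`
the exponent of `x_i` in `μ` is smaller and the exponents agree beyond `i`. -/
def mRlexLt {k : ℕ} (μ ν : Mono k) : Prop :=
  ∃ i, μ i < ν i ∧ ∀ j, i < j → μ j = ν j

/-- The bound vector `(∞^{n-d-m}, p_1 - 1, …, p_m - 1)` on `n - d` variables. -/
def lamBounds (n d m : ℕ) (p : Fin m → ℕ) : Fin (n - d) → ℕ∞ :=
  fun j =>
    if (j : ℕ) < n - d - m then ⊤
    else if h2 : (j : ℕ) - (n - d - m) < m then (((p ⟨(j : ℕ) - (n - d - m), h2⟩ - 1 : ℕ)) : ℕ∞)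
    else 0

/-- The vertex set of `Λ(l; p_1, …, p_m)`: a set `V'` of size `l` together with
disjoint sets `P_i` of sizes `p_i`. -/
abbrev LamVert (l : ℕ) {m : ℕ} (p : Fin m → ℕ) := Fin l ⊕ Σ i : Fin m, Fin (p i)

/-- The vertex block `P_i`. -/
def Pblock (l : ℕ) {m : ℕ} (p : Fin m → ℕ) (i : Fin m) : Finset (LamVert l p) :=
  Finset.univ.image (fun j : Fin (p i) => (Sum.inr ⟨i, j⟩ : LamVert l p))

/-- The faces of `Λ(l; p_1, …, p_m)`: subsets of the vertex set containing no `P_i` entirely. -/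
def LambdaFaces (l : ℕ) {m : ℕ} (p : Fin m → ℕ) : Set (Finset (LamVert l p)) :=
  {F | ∀ i : Fin m, ¬ Pblock l p i ⊆ F}

/-- `full(τ) = {i : |P_i ∩ τ| = |P_i| - 1}`. -/
def fullSet {l m : ℕ} {p : Fin m → ℕ} (τ : Finset (LamVert l p)) : Finset (Fin m) :=
  Finset.univ.filter (fun i => (Pblock l p i ∩ τ).card = p i - 1)

/-- The elements of `P_i` missing from `τ`; a singleton `{miss(τ, i)}` when `i ∈ full(τ)`. -/
def missSet {l m : ℕ} {p : Fin m → ℕ} (τ : Finset (LamVert l p)) (i : Fin m) :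
    Finset (LamVert l p) :=
  Pblock l p i \ τ

/-- Candidates for `s_O(τ)`: vertices not in `τ` and different from each `miss(τ, i)`,
`i ∈ full(τ)`. -/
def sCand {l m : ℕ} {p : Fin m → ℕ} (τ : Finset (LamVert l p)) : Finset (LamVert l p) :=
  Finset.univ.filter (fun v => v ∉ τ ∧ ∀ i ∈ fullSet τ, v ∉ missSet τ i)

/-- The position (with respect to the ordering `e`) of `s_O(τ)`, or `∞` if it does not exist. -/
noncomputable def sPos {l m n : ℕ} {p : Fin m → ℕ} (e : LamVert l p ≃ Fin n)
    (τ : Finset (LamVert l p)) : WithTop (Fin n) :=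
  ((sCand τ).image e).min

/-- `τ_{> s_O(τ)}`. -/
noncomputable def tauAbove {l m n : ℕ} {p : Fin m → ℕ} (e : LamVert l p ≃ Fin n)
    (τ : Finset (LamVert l p)) : Finset (LamVert l p) :=
  τ.filter (fun y => sPos e τ < ((e y : Fin n) : WithTop (Fin n)))

/-- `U_O(τ) = { y ∈ P_i : y > miss(τ, i) for some i ∈ full(τ) }`. -/
def USet {l m n : ℕ} {p : Fin m → ℕ} (e : LamVert l p ≃ Fin n)
    (τ : Finset (LamVert l p)) : Finset (LamVert l p) :=
  Finset.univ.filter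
    (fun y => ∃ i ∈ fullSet τ, y ∈ Pblock l p i ∧ ∃ w ∈ missSet τ i, e w < e y)

/-- `R_O(τ) = τ_{> s_O(τ)} ∪ U_O(τ)`. -/
noncomputable def RSet {l m n : ℕ} {p : Fin m → ℕ} (e : LamVert l p ≃ Fin n)
    (τ : Finset (LamVert l p)) : Finset (LamVert l p) :=
  tauAbove e τ ∪ USet e τ

/-- Reverse lexicographic comparison of two finite vertex sets with respect to the
ordering `e`: `τ < τ'` if the largest vertex in which they differ belongs to `τ'`. -/
def rlexLt {l m n : ℕ} {p : Fin m → ℕ} (e : LamVert l p ≃ Fin n)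
    (τ τ' : Finset (LamVert l p)) : Prop :=
  ∃ v, v ∈ τ' ∧ v ∉ τ ∧ ∀ w, e v < e w → (w ∈ τ ↔ w ∈ τ')

/-- The `d`-skeleton of `Λ`: faces of cardinality at most `d`. -/
def skel (l : ℕ) {m : ℕ} (p : Fin m → ℕ) (d : ℕ) : Set (Finset (LamVert l p)) :=
  {F | F ∈ LambdaFaces l p ∧ F.card ≤ d}

/-- The facets of the `d`-skeleton of `Λ`: faces of cardinality exactly `d`. -/
def skelFacets (l : ℕ) {m : ℕ} (p : Fin m → ℕ) (d : ℕ) : Set (Finset (LamVert l p)) :=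
  {F | F ∈ LambdaFaces l p ∧ F.card = d}

/-- `S^d`: the monomials of `S(b)` of total degree at most `d`. -/
def SBoundDeg {k : ℕ} (b : Fin k → ℕ∞) (d : ℕ) : Set (Mono k) :=
  {μ | μ ∈ SBound b ∧ mDeg μ ≤ d}

lemma isComplex_setOf_exists_subset {V : Type*} (L : List (Finset V)) :
    IsComplex {γ | ∃ τ ∈ L, γ ⊆ τ} :=
  fun _ ⟨τ, hτ, hsτ⟩ _ hts => ⟨τ, hτ, hts.trans hsτ⟩

lemma sum_Icc_pow_mul_pow {α R : Type*} [DecidableEq α] [CommSemiring R] {s t : Finset α}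
    (h : s ⊆ t) (a b : R) :
    ∑ u ∈ Icc s t, a ^ #u * b ^ (#t - #u) = a ^ #s * (a + b) ^ (#t - #s) := by
  have hinj : Set.InjOn (s ∪ ·) (t \ s).powerset := by
    intro u hu w hw huw
    simp only [coe_powerset, Set.mem_preimage, Set.mem_powerset_iff, coe_subset] at hu hw
    rw [← union_sdiff_cancel_left (disjoint_of_subset_right hu disjoint_sdiff),
      ← union_sdiff_cancel_left (disjoint_of_subset_right hw disjoint_sdiff)]
    exact congrArg (· \ s) huw
  rw [Icc_eq_image_powerset h, sum_image hinj, ← card_sdiff_of_subset h,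
    ← sum_pow_mul_eq_add_pow, mul_sum]
  refine sum_congr rfl fun u hu => ?_
  have hdisj : Disjoint s u := disjoint_of_subset_right (mem_powerset.mp hu) disjoint_sdiff
  have hut : #u ≤ #(t \ s) := card_le_card (mem_powerset.mp hu)
  rw [card_union_of_disjoint hdisj, card_sdiff_of_subset h, pow_add, mul_assoc]
  congr 3
  have := card_le_card h
  rw [card_sdiff_of_subset h] at hut
  omega

lemma sum_range_card_filter_mul {ι R : Type*} [Semiring R] (S : Finset ι) (g : ι → ℕ)
    {d : ℕ} (hg : ∀ s ∈ S, g s ≤ d) (w : ℕ → R) :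
    ∑ i ∈ range (d + 1), (#{s ∈ S | g s = i} : R) * w i = ∑ s ∈ S, w (g s) := by
  rw [← sum_fiberwise_of_maps_to (g := g) (t := range (d + 1))
    (fun s hs => mem_range.mpr (Nat.lt_succ_of_le (hg s hs)))]
  refine sum_congr rfl fun i _ => ?_
  rw [sum_congr rfl fun s hs => congrArg w (mem_filter.mp hs).2, sum_const, nsmul_eq_mul]

section

variable {V : Type*} [DecidableEq V]

section prevFacets

variable {L L' : List (Finset V)} {a τ σ γ γ' : Finset V}

@[simp]
lemma prevFacets_cons_self (l : List (Finset V)) (a : Finset V) : prevFacets (a :: l) a = [] := by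
  simp [prevFacets]

lemma prevFacets_cons_of_ne (l : List (Finset V)) (h : a ≠ τ) :
    prevFacets (a :: l) τ = a :: prevFacets l τ := by
  simp [prevFacets, h]

lemma mem_of_mem_prevFacets (h : σ ∈ prevFacets L τ) : σ ∈ L :=
  (List.takeWhile_sublist _).mem h

lemma ne_of_mem_prevFacets (h : σ ∈ prevFacets L τ) : σ ≠ τ := by
  simpa using List.mem_takeWhile_imp h

lemma coveredBefore_of_subset (hγ : γ ⊆ γ') (h : coveredBefore L τ γ') :
    coveredBefore L τ γ :=
  let ⟨σ, hσ, hγ'σ⟩ := h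
  ⟨σ, hσ, hγ.trans hγ'σ⟩

lemma mem_prevFacets_or_mem_prevFacets (hnd : L.Nodup) (hτ : τ ∈ L) (hσ : σ ∈ L)
    (hne : τ ≠ σ) :
    τ ∈ prevFacets L σ ∨ σ ∈ prevFacets L τ := by
  induction L with
  | nil => simp at hτ
  | cons a l ih =>
    obtain ⟨hal, hnd⟩ := List.nodup_cons.mp hnd
    rcases List.mem_cons.mp hτ with rfl | hτ
    · simp [prevFacets_cons_of_ne l hne]
    rcases List.mem_cons.mp hσ with rfl | hσ
    · simp [prevFacets_cons_of_ne l hne.symm]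
    rw [prevFacets_cons_of_ne l (ne_of_mem_of_not_mem hσ hal).symm,
      prevFacets_cons_of_ne l (ne_of_mem_of_not_mem hτ hal).symm]
    exact (ih hnd hτ hσ).imp (List.mem_cons_of_mem _) (List.mem_cons_of_mem _)

lemma exists_mem_subset_not_coveredBefore (h : ∃ τ ∈ L, γ ⊆ τ) :
    ∃ τ ∈ L, γ ⊆ τ ∧ ¬ coveredBefore L τ γ := by
  induction L with
  | nil => simp at h
  | cons a l ih =>
    by_cases hγa : γ ⊆ a
    · exact ⟨a, List.mem_cons_self, hγa, by simp [coveredBefore]⟩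
    obtain ⟨τ, hτ, hγτ⟩ := h
    obtain ⟨τ', hτ', hγτ', hnc⟩ :=
      ih ⟨τ, (List.mem_cons.mp hτ).resolve_left (by rintro rfl; exact hγa hγτ), hγτ⟩
    have hne : a ≠ τ' := by rintro rfl; exact hγa hγτ'
    refine ⟨τ', List.mem_cons_of_mem _ hτ', hγτ', ?_⟩
    rintro ⟨σ, hσ, hγσ⟩
    rw [prevFacets_cons_of_ne l hne] at hσ
    rcases List.mem_cons.mp hσ with rfl | hσ
    · exact hγa hγσ
    · exact hnc ⟨σ, hσ, hγσ⟩

lemma mem_prevFacets_of_sublist (hsub : L'.Sublist L) (hnd : L.Nodup) (hτ : τ ∈ L')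
    (hσ : σ ∈ prevFacets L' τ) : σ ∈ prevFacets L τ := by
  induction hsub with
  | slnil => simp at hτ
  | @cons l' l a hs ih =>
    obtain ⟨hal, hnd⟩ := List.nodup_cons.mp hnd
    rw [prevFacets_cons_of_ne l (ne_of_mem_of_not_mem (hs.subset hτ) hal).symm]
    exact List.mem_cons_of_mem _ (ih hnd hτ hσ)
  | @cons_cons l' l a hs ih =>
    obtain ⟨-, hnd⟩ := List.nodup_cons.mp hnd
    obtain rfl | haτ := eq_or_ne a τ
    · simp [prevFacets_cons_self] at hσ
    rw [prevFacets_cons_of_ne l' haτ] at hσ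
    rw [prevFacets_cons_of_ne l haτ]
    rcases List.mem_cons.mp hσ with rfl | hσ
    · exact List.mem_cons_self
    · exact List.mem_cons_of_mem _ (ih hnd ((List.mem_cons.mp hτ).resolve_left haτ.symm) hσ)

lemma coveredBefore_of_sublist (hsub : L'.Sublist L) (hnd : L.Nodup) (hτ : τ ∈ L')
    (h : coveredBefore L' τ γ) : coveredBefore L τ γ :=
  let ⟨σ, hσ, hγσ⟩ := h
  ⟨σ, mem_prevFacets_of_sublist hsub hnd hτ hσ, hγσ⟩

end prevFacets

open Classical in
noncomputable def restrictionFace (L : List (Finset V)) (τ : Finset V) : Finset V :=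
  {v ∈ τ | coveredBefore L τ (τ.erase v)}

lemma mem_restrictionFace {L : List (Finset V)} {τ : Finset V} {v : V} :
    v ∈ restrictionFace L τ ↔ v ∈ τ ∧ coveredBefore L τ (τ.erase v) := by
  classical exact mem_filter

lemma restrictionFace_subset (L : List (Finset V)) (τ : Finset V) : restrictionFace L τ ⊆ τ :=
  fun _ hv => (mem_restrictionFace.mp hv).1

namespace IsShelling

variable {Γ : Set (Finset V)} {d : ℕ} {L L' : List (Finset V)} {τ γ : Finset V}

lemma card_eq (hL : IsShelling Γ d L) (hτ : τ ∈ L) : #τ = d :=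
  ((hL.2.1 τ).mp hτ).2

lemma mem (hL : IsShelling Γ d L) (hτ : τ ∈ L) : τ ∈ Γ :=
  ((hL.2.1 τ).mp hτ).1

lemma not_coveredBefore_self (hL : IsShelling Γ d L) (hτ : τ ∈ L) :
    ¬ coveredBefore L τ τ := by
  rintro ⟨σ, hσ, hτσ⟩
  have hσL := mem_of_mem_prevFacets hσ
  exact ne_of_mem_prevFacets hσ
    (eq_of_subset_of_card_le hτσ (by rw [hL.card_eq hσL, hL.card_eq hτ])).symm

lemma coveredBefore_iff (hL : IsShelling Γ d L) (hτ : τ ∈ L) (hγ : γ ⊆ τ) :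
    coveredBefore L τ γ ↔ ¬ restrictionFace L τ ⊆ γ := by
  constructor
  · intro hcov
    have hne : prevFacets L τ ≠ [] := by
      obtain ⟨σ, hσ, -⟩ := hcov
      exact List.ne_nil_of_mem hσ
    obtain ⟨t, ⟨htτ, htcov⟩, hγt, htcard⟩ := (hL.2.2.2 τ hτ hne).2 γ ⟨hγ, hcov⟩
    have hss : t ⊂ τ :=
      htτ.ssubset_of_ne (by rintro rfl; exact hL.not_coveredBefore_self hτ htcov)
    obtain ⟨v, hvτ, htv⟩ := ssubset_iff_exists_subset_erase.mp hss
    have hte : t = τ.erase v := eq_of_subset_of_card_le htv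
      (by rw [card_erase_of_mem hvτ, hL.card_eq hτ, htcard])
    intro hR
    have hv : v ∈ restrictionFace L τ := mem_restrictionFace.mpr ⟨hvτ, hte ▸ htcov⟩
    exact (subset_erase.mp (hte ▸ hγt)).2 (hR hv)
  · intro hR
    obtain ⟨v, hv, hvγ⟩ := not_subset.mp hR
    exact coveredBefore_of_subset (subset_erase.mpr ⟨hγ, hvγ⟩)
      (mem_restrictionFace.mp hv).2

lemma TL_eq_image_erase (hL : IsShelling Γ d L) (hτ : τ ∈ L) :
    TL L τ = (restrictionFace L τ).image τ.erase := by
  ext γ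
  simp only [TL, Set.mem_ofPred_eq, coe_image, Set.mem_image, mem_coe]
  constructor
  · rintro ⟨hγτ, hcov, hmax⟩
    obtain ⟨v, hv, hvγ⟩ := not_subset.mp ((hL.coveredBefore_iff hτ hγτ).mp hcov)
    exact ⟨v, hv, hmax _ (subset_erase.mpr ⟨hγτ, hvγ⟩) (erase_subset _ _)
      (mem_restrictionFace.mp hv).2⟩
  · rintro ⟨v, hv, rfl⟩
    have ⟨hvτ, hcov⟩ := mem_restrictionFace.mp hv
    refine ⟨erase_subset _ _, hcov, fun γ' hγ' hγ'τ hcov' => ?_⟩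
    by_contra hne
    have hlt := card_lt_card (hγ'.ssubset_of_ne (Ne.symm hne))
    rw [card_erase_of_mem hvτ] at hlt
    have : γ' = τ := eq_of_subset_of_card_le hγ'τ (by omega)
    exact hL.not_coveredBefore_self hτ (this ▸ hcov')

lemma ncard_TL (hL : IsShelling Γ d L) (hτ : τ ∈ L) :
    (TL L τ).ncard = #(restrictionFace L τ) := by
  rw [hL.TL_eq_image_erase hτ, Set.ncard_coe_finset,
    card_image_of_injOn ((erase_injOn τ).mono (restrictionFace_subset L τ))]

lemma mem_Icc_restrictionFace_iff (hL : IsShelling Γ d L) (hτ : τ ∈ L) :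
    γ ∈ Icc (restrictionFace L τ) τ ↔ γ ⊆ τ ∧ ¬ coveredBefore L τ γ := by
  rw [mem_Icc, and_comm]
  exact and_congr_right fun hγ => by rw [hL.coveredBefore_iff hτ hγ, not_not]

lemma pairwiseDisjoint_Icc_restrictionFace (hL : IsShelling Γ d L) :
    (L.toFinset : Set (Finset V)).PairwiseDisjoint fun τ => Icc (restrictionFace L τ) τ := by
  intro τ hτ σ hσ hne
  rw [mem_coe, List.mem_toFinset] at hτ hσ
  refine disjoint_left.mpr fun γ hγτ hγσ => ?_
  rw [hL.mem_Icc_restrictionFace_iff hτ] at hγτ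
  rw [hL.mem_Icc_restrictionFace_iff hσ] at hγσ
  rcases mem_prevFacets_or_mem_prevFacets hL.1 hτ hσ hne with h | h
  · exact hγσ.2 ⟨τ, h, hγτ.1⟩
  · exact hγτ.2 ⟨σ, h, hγσ.1⟩

lemma eq_biUnion_Icc_restrictionFace (hΓ : IsComplex Γ) (hL : IsShelling Γ d L) :
    Γ = ↑(L.toFinset.biUnion fun τ => Icc (restrictionFace L τ) τ) := by
  ext γ
  simp only [coe_biUnion, mem_coe, List.mem_toFinset, Set.mem_iUnion, exists_prop]
  constructor
  · intro hγ
    obtain ⟨τ, hτ, hγτ, hnc⟩ := exists_mem_subset_not_coveredBefore (hL.2.2.1 γ hγ)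
    exact ⟨τ, hτ, (hL.mem_Icc_restrictionFace_iff hτ).mpr ⟨hγτ, hnc⟩⟩
  · rintro ⟨τ, hτ, hγ⟩
    exact hΓ τ (hL.mem hτ) γ ((hL.mem_Icc_restrictionFace_iff hτ).mp hγ).1

theorem isHVector (hΓ : IsComplex Γ) (hL : IsShelling Γ d L) :
    IsHVector Γ d fun i => ({τ | τ ∈ L ∧ (TL L τ).ncard = i}.ncard : ℤ) := by
  set F := L.toFinset.biUnion fun τ => Icc (restrictionFace L τ) τ
  have hΓF := hL.eq_biUnion_Icc_restrictionFace hΓ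
  have hR : ∀ τ ∈ L.toFinset, #(restrictionFace L τ) ≤ d := fun τ hτ =>
    hL.card_eq (List.mem_toFinset.mp hτ) ▸ card_le_card (restrictionFace_subset L τ)
  have hF : ∀ γ ∈ F, #γ ≤ d := by
    intro γ hγ
    obtain ⟨τ, hτ, hγτ⟩ := mem_biUnion.mp hγ
    exact hL.card_eq (List.mem_toFinset.mp hτ) ▸ card_le_card (mem_Icc.mp hγτ).2
  have hcount : ∀ i, {τ | τ ∈ L ∧ (TL L τ).ncard = i}.ncard =
      #{τ ∈ L.toFinset | #(restrictionFace L τ) = i} := by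
    intro i
    rw [← Set.ncard_coe_finset, coe_filter]
    congr 1
    ext τ
    simp only [List.mem_toFinset, Set.mem_ofPred_eq]
    exact and_congr_right fun hτ => by rw [hL.ncard_TL hτ]
  have hfaceCount : ∀ i, faceCount Γ i = #{γ ∈ F | #γ = i} := by
    intro i
    rw [faceCount, hΓF, ← Set.ncard_coe_finset, coe_filter]
    rfl
  unfold IsHVector
  simp only [hcount, hfaceCount, map_natCast, mul_assoc]
  rw [sum_range_card_filter_mul _ _ hR, sum_range_card_filter_mul _ _ hF,
    sum_biUnion hL.pairwiseDisjoint_Icc_restrictionFace]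
  refine sum_congr rfl fun τ hτ => ?_
  rw [← hL.card_eq (List.mem_toFinset.mp hτ), sum_Icc_pow_mul_pow (restrictionFace_subset L τ)]
  simp

lemma coveredBefore_sublist_iff (hL : IsShelling Γ d L) (hsub : L'.Sublist L)
    (hT : ∀ τ ∈ L', TL L' τ = TL L τ) (hτ : τ ∈ L') (hγ : γ ⊆ τ) :
    coveredBefore L' τ γ ↔ coveredBefore L τ γ := by
  refine ⟨coveredBefore_of_sublist hsub hL.1 hτ, fun hcov => ?_⟩
  have hτL := hsub.subset hτ
  obtain ⟨v, hv, hvγ⟩ := not_subset.mp ((hL.coveredBefore_iff hτL hγ).mp hcov)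
  have hvT : τ.erase v ∈ TL L' τ := by
    rw [hT τ hτ, hL.TL_eq_image_erase hτL]
    exact mem_coe.mpr (mem_image_of_mem _ hv)
  exact coveredBefore_of_subset (subset_erase.mpr ⟨hγ, hvγ⟩) hvT.2.1

theorem sublist (hL : IsShelling Γ d L) (hsub : L'.Sublist L)
    (hT : ∀ τ ∈ L', TL L' τ = TL L τ) : IsShelling {γ | ∃ τ ∈ L', γ ⊆ τ} d L' := by
  refine ⟨hL.1.sublist hsub, fun τ => ?_, fun γ hγ => hγ, fun τ hτ hne => ?_⟩
  · refine ⟨fun hτ => ⟨⟨τ, hτ, subset_rfl⟩, hL.card_eq (hsub.subset hτ)⟩, ?_⟩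
    rintro ⟨⟨σ, hσ, hτσ⟩, hτd⟩
    rwa [eq_of_subset_of_card_le hτσ (by rw [hL.card_eq (hsub.subset hσ), hτd])]
  · have hneL : prevFacets L τ ≠ [] := by
      obtain ⟨σ, hσ⟩ := List.exists_mem_of_ne_nil _ hne
      exact List.ne_nil_of_mem (mem_prevFacets_of_sublist hsub hL.1 hτ hσ)
    convert hL.2.2.2 τ (hsub.subset hτ) hneL using 2
    ext γ
    exact and_congr_right (hL.coveredBefore_sublist_iff hsub hT hτ)

end IsShelling

end

theorem subshelling_general {V : Type*} [DecidableEq V] (Γ : Set (Finset V)) (d : ℕ)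
    (L : List (Finset V)) (hΓ : IsComplex Γ) (hL : IsShelling Γ d L)
    (K : Set (Finset V))
    (L' : List (Finset V)) (hsub : L'.Sublist L) (hmem : ∀ τ, τ ∈ L' ↔ τ ∈ K)
    (hT : ∀ τ ∈ L', TL L' τ = TL L τ) :
    IsComplex {γ | ∃ τ ∈ L', γ ⊆ τ} ∧
    {γ | ∃ τ ∈ L', γ ⊆ τ} ⊆ Γ ∧
    IsShelling {γ | ∃ τ ∈ L', γ ⊆ τ} d L' ∧
    IsHVector {γ | ∃ τ ∈ L', γ ⊆ τ} d
      (fun i => ({τ | τ ∈ K ∧ (TL L τ).ncard = i}.ncard : ℤ)) := by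
  have hL' := hL.sublist hsub hT
  refine ⟨isComplex_setOf_exists_subset L', fun γ ⟨τ, hτ, hγτ⟩ => ?_, hL', ?_⟩
  · exact hΓ τ (hL.mem (hsub.subset hτ)) γ hγτ
  · have hcount : ∀ i,
        {τ | τ ∈ K ∧ (TL L τ).ncard = i} = {τ | τ ∈ L' ∧ (TL L' τ).ncard = i} := by
      intro i
      ext τ
      simp only [Set.mem_ofPred_eq, ← hmem]
      exact and_congr_right fun hτ => by rw [hT τ hτ]
    simpa only [hcount] using hL'.isHVector (isComplex_setOf_exists_subset L')

/-- If `L` is a shelling of the `(d-1)`-dimensional complex `Γ`, `K` is a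
subset of the facets, and the ordering `L'` of `K` inherited from `L` satisfies
`T_{L'}(τ) = T_L(τ)` for all `τ ∈ K`, then `Γ' = ∪_{τ ∈ K} τ̄` is a shellable subcomplex of
`Γ` (with shelling `L'`) whose h-vector is `h'_i = |{τ ∈ K : |T_L(τ)| = i}|`. -/
theorem subshelling {V : Type*} [DecidableEq V] (Γ : Set (Finset V)) (d : ℕ)
    (L : List (Finset V)) (hΓ : IsComplex Γ) (hL : IsShelling Γ d L)
    (K : Set (Finset V)) (hK : ∀ τ ∈ K, τ ∈ L)
    (L' : List (Finset V)) (hsub : L'.Sublist L) (hmem : ∀ τ, τ ∈ L' ↔ τ ∈ K)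
    (hT : ∀ τ ∈ L', TL L' τ = TL L τ) :
    IsComplex {γ | ∃ τ ∈ L', γ ⊆ τ} ∧
    {γ | ∃ τ ∈ L', γ ⊆ τ} ⊆ Γ ∧
    IsShelling {γ | ∃ τ ∈ L', γ ⊆ τ} d L' ∧
    IsHVector {γ | ∃ τ ∈ L', γ ⊆ τ} d
      (fun i => ({τ | τ ∈ K ∧ (TL L τ).ncard = i}.ncard : ℤ)) :=
  subshelling_general Γ d L hΓ hL K L' hsub hmem hT
end

section
/- Let Λ = Λ(l; p_1, …, p_m) with vertex set V totally ordered by O, let 1 ≤ d ≤ n − m, and let τ be a facet of skel_d(Λ). Then τ is the reverse lexicographically first facet of skel_d(Λ) containing R_O(τ); that is, every facet τ' of skel_d(Λ) with R_O(τ) ⊆ τ' satisfies τ ≤ τ' in the reverse lexicographic order. -/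
open Finset

/-!
Let `τ' ⊇ R_O(τ)` be another facet and `v` the largest vertex in which `τ` and `τ'` differ;
we show `v ∈ τ'`. Otherwise `v ∈ τ \ τ'` lies outside `R_O(τ)`, so `v ≤ s_O(τ)`. Every
`u ∈ τ' \ τ` is below `v`, hence below `s_O(τ)`, so `u = miss(τ, i)` for some `i ∈ full(τ)`.
As `τ'` is a face it misses some `w ∈ P_i`; then `w ∈ τ`, and `w ∉ U_O(τ)` forces `w < u`.
Since `u` is determined by the block of `w`, this injects `τ' \ τ` into `(τ \ τ') - {v}`,
contradicting `|τ| = |τ'|`.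
-/

open scoped symmDiff

section Blocks

variable {l m : ℕ} {p : Fin m → ℕ}

lemma mem_Pblock {i : Fin m} {x : LamVert l p} :
    x ∈ Pblock l p i ↔ ∃ j : Fin (p i), x = Sum.inr ⟨i, j⟩ := by
  simp [Pblock, eq_comm]

lemma eq_of_mem_Pblock {i i' : Fin m} {x : LamVert l p}
    (h : x ∈ Pblock l p i) (h' : x ∈ Pblock l p i') : i = i' := by
  obtain ⟨j, rfl⟩ := mem_Pblock.1 h
  obtain ⟨j', hj'⟩ := mem_Pblock.1 h'
  exact congrArg Sigma.fst (Sum.inr.inj hj')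

lemma card_Pblock (i : Fin m) : (Pblock l p i).card = p i := by
  rw [Pblock, card_image_of_injective _ fun a b hab => by simpa using Sum.inr.inj hab]
  simp

lemma card_missSet_le_one {τ : Finset (LamVert l p)} {i : Fin m} (hi : i ∈ fullSet τ) :
    (missSet τ i).card ≤ 1 := by
  have hfull : (Pblock l p i ∩ τ).card = p i - 1 := by simpa [fullSet] using hi
  have hsplit := card_sdiff_add_card_inter (Pblock l p i) τ
  rw [card_Pblock] at hsplit
  unfold missSet
  omega

end Blocks

section Order

variable {l m n : ℕ} {p : Fin m → ℕ} (e : LamVert l p ≃ Fin n) {τ τ' : Finset (LamVert l p)}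

lemma exists_max_mem_symmDiff (hne : τ ≠ τ') :
    ∃ v ∈ τ ∆ τ', ∀ w ∈ τ ∆ τ', e w ≤ e v :=
  (τ ∆ τ').exists_max_image e (symmDiff_nonempty.2 hne)

lemma rlexLt_of_max_mem_symmDiff {v : LamVert l p} (hv : v ∈ τ' \ τ)
    (hmax : ∀ w ∈ τ ∆ τ', e w ≤ e v) : rlexLt e τ τ' := by
  refine ⟨v, (mem_sdiff.1 hv).1, (mem_sdiff.1 hv).2, fun w hw => ?_⟩
  by_contra hdiff
  exact (hmax w (mem_symmDiff.2 (by tauto))).not_gt hw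

lemma le_sPos_of_mem_of_notMem_RSet {v : LamVert l p} (hv : v ∈ τ) (hvR : v ∉ RSet e τ) :
    (e v : WithTop (Fin n)) ≤ sPos e τ :=
  not_lt.1 fun hlt => hvR (mem_union_left _ (mem_filter.2 ⟨hv, hlt⟩))

lemma sPos_le_of_notMem_missSet {u : LamVert l p} (hu : u ∉ τ)
    (hmiss : ∀ i ∈ fullSet τ, u ∉ missSet τ i) : sPos e τ ≤ (e u : WithTop (Fin n)) :=
  min_le (mem_image_of_mem e (by simpa [sCand] using ⟨hu, hmiss⟩))

/-- The vertices of `P_i` above `miss(τ, i)` lie in `U_O(τ)`. -/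
lemma exists_lt_mem_sdiff_of_mem_missSet (hτ' : τ' ∈ LambdaFaces l p) (hU : USet e τ ⊆ τ')
    {i : Fin m} (hi : i ∈ fullSet τ) {u : LamVert l p} (hu : u ∈ missSet τ i) (huτ' : u ∈ τ') :
    ∃ w ∈ Pblock l p i, w ∈ τ \ τ' ∧ e w < e u := by
  obtain ⟨w, hwP, hwτ'⟩ := not_subset.1 (hτ' i)
  have hwu : w ≠ u := fun h => hwτ' (h ▸ huτ')
  have hwτ : w ∈ τ := by
    by_contra hwτ
    exact hwu (card_le_one.1 (card_missSet_le_one hi) w (mem_sdiff.2 ⟨hwP, hwτ⟩) u hu)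
  have hwU (hlt : e u < e w) : w ∈ USet e τ := mem_filter.2 ⟨mem_univ _, i, hi, hwP, u, hu, hlt⟩
  exact ⟨w, hwP, mem_sdiff.2 ⟨hwτ, hwτ'⟩,
    lt_of_le_of_ne (not_lt.1 fun hlt => hwτ' (hU (hwU hlt))) (e.injective.ne hwu)⟩

lemma card_sdiff_lt_of_RSet_subset (hτ' : τ' ∈ LambdaFaces l p) (hR : RSet e τ ⊆ τ')
    {v : LamVert l p} (hv : v ∈ τ \ τ') (hbelow : ∀ u ∈ τ' \ τ, e u ≤ e v) :
    (τ' \ τ).card < (τ \ τ').card := by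
  have hvτ := (mem_sdiff.1 hv).1
  have hvs := le_sPos_of_mem_of_notMem_RSet e hvτ fun h => (mem_sdiff.1 hv).2 (hR h)
  have hlt : ∀ u ∈ τ' \ τ, e u < e v := fun u hu =>
    lt_of_le_of_ne (hbelow u hu) (e.injective.ne fun h => (mem_sdiff.1 hu).2 (h ▸ hvτ))
  have hmiss : ∀ u ∈ τ' \ τ, ∃ i ∈ fullSet τ, u ∈ missSet τ i := by
    intro u hu
    by_contra! hnot
    have := (sPos_le_of_notMem_missSet e (mem_sdiff.1 hu).2 hnot).trans_lt
      (WithTop.coe_lt_coe.2 (hlt u hu))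
    exact this.not_ge hvs
  let companion : LamVert l p → LamVert l p → Prop := fun u w =>
    e w < e u ∧ ∃ i ∈ fullSet τ, u ∈ missSet τ i ∧ w ∈ Pblock l p i
  calc (τ' \ τ).card ≤ ((τ \ τ').erase v).card := by
        refine card_le_card_of_forall_subsingleton companion (fun u hu => ?_) ?_
        · obtain ⟨i, hi, hui⟩ := hmiss u hu
          obtain ⟨w, hwP, hw, hwu⟩ :=
            exists_lt_mem_sdiff_of_mem_missSet e hτ' (subset_union_right.trans hR) hi hui
              (mem_sdiff.1 hu).1
          exact ⟨w, mem_erase.2 ⟨fun h => (hwu.trans (hlt u hu)).ne (congrArg e h), hw⟩,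
            hwu, i, hi, hui, hwP⟩
        · rintro w - u ⟨-, -, i, hi, hui, hwi⟩ u' ⟨-, -, i', hi', hui', hwi'⟩
          obtain rfl := eq_of_mem_Pblock hwi hwi'
          exact card_le_one.1 (card_missSet_le_one hi) u hui u' hui'
    _ < (τ \ τ').card := card_erase_lt_of_mem hv

end Order

theorem revlex_first_facet_general {l m n d : ℕ} (p : Fin m → ℕ)
    (e : LamVert l p ≃ Fin n)
    (τ : Finset (LamVert l p)) (hτ : τ ∈ skelFacets l p d) :
    ∀ τ' ∈ skelFacets l p d, RSet e τ ⊆ τ' → τ = τ' ∨ rlexLt e τ τ' := by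
  intro τ' hτ' hR
  by_cases heq : τ = τ'
  · exact Or.inl heq
  obtain ⟨v, hv, hmax⟩ := exists_max_mem_symmDiff e heq
  rcases mem_symmDiff.1 hv with hvτ | hvτ'
  · have hlt := card_sdiff_lt_of_RSet_subset e hτ'.1 hR (mem_sdiff.2 hvτ)
      fun u hu => hmax u (mem_symmDiff.2 (Or.inr (mem_sdiff.1 hu)))
    have := card_sdiff_comm (hτ.2.trans hτ'.2.symm)
    omega
  · exact Or.inr (rlexLt_of_max_mem_symmDiff e (mem_sdiff.2 hvτ') hmax)

/-- A facet `τ` of `skel_d(Λ)` is the reverse lexicographically first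
facet containing `R_O(τ)`. -/
theorem revlex_first_facet {l m n d : ℕ} (p : Fin m → ℕ)
    (hp : ∀ i, 2 ≤ p i) (hn : n = l + ∑ i, p i)
    (hd1 : 1 ≤ d) (hd2 : d ≤ n - m)
    (e : LamVert l p ≃ Fin n)
    (τ : Finset (LamVert l p)) (hτ : τ ∈ skelFacets l p d) :
    ∀ τ' ∈ skelFacets l p d, RSet e τ ⊆ τ' → τ = τ' ∨ rlexLt e τ τ' :=
  revlex_first_facet_general p e τ hτ
end
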